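/- arXiv:2212.12450 — 5 statements merged into one kernel-verified Lean document; each statement's English description precedes it below -/
import Mathlib

section
/- A configuration in the plane that is monotone, i.e., for every i the displacement C(v_{i+1}) − C(v_i) has nonnegative x- and y-components and is nonzero, is noncrossing: any two distinct edges of the polygonal path intersect only if they are consecutive, and then only at their shared vertex. -/
/-- A polygonal path `C 0, C 1, …, C n` (with `n` edges) is noncrossing if
nonconsecutive edges are disjoint and consecutive edges meet exactly at their
shared vertex. -/
def Noncrossing (C : ℕ → ℝ × ℝ) (n : ℕ) : Prop :=
  (∀ i j : ℕ, j < n → i + 1 < j →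
      segment ℝ (C i) (C (i + 1)) ∩ segment ℝ (C j) (C (j + 1)) = ∅) ∧
  (∀ i : ℕ, i + 1 < n →
      segment ℝ (C i) (C (i + 1)) ∩ segment ℝ (C (i + 1)) (C (i + 2)) = {C (i + 1)})

lemma seg_bounds {a b p : ℝ × ℝ} (h1 : a.1 ≤ b.1) (h2 : a.2 ≤ b.2)
    (hp : p ∈ segment ℝ a b) :
    a.1 ≤ p.1 ∧ p.1 ≤ b.1 ∧ a.2 ≤ p.2 ∧ p.2 ≤ b.2 := by
  obtain ⟨s, t, hs, ht, hst, rfl⟩ := hp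
  obtain rfl : s = 1 - t := by linarith
  simp only [Prod.fst_add, Prod.snd_add, Prod.smul_fst, Prod.smul_snd, smul_eq_mul]
  refine ⟨?_, ?_, ?_, ?_⟩ <;>
    nlinarith [mul_nonneg ht (sub_nonneg.mpr h1), mul_nonneg hs (sub_nonneg.mpr h1),
      mul_nonneg ht (sub_nonneg.mpr h2), mul_nonneg hs (sub_nonneg.mpr h2)]

/-- A monotone planar configuration — every edge displacement has nonnegative
x- and y-components and is nonzero, and consecutive edges are not antiparallel
(each edge either continues in the same direction as the previous one or turns 90°) —
is noncrossing. -/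
theorem stmt1 (n : ℕ) (C : ℕ → ℝ × ℝ)
    (hmono : ∀ i < n,
      (C i).1 ≤ (C (i + 1)).1 ∧ (C i).2 ≤ (C (i + 1)).2 ∧ C (i + 1) ≠ C i)
    (hturn : ∀ i : ℕ, i + 1 < n →
      (∃ t : ℝ, 0 < t ∧ C (i + 2) - C (i + 1) = t • (C (i + 1) - C i)) ∨
      ((C (i + 1) - C i).1 * (C (i + 2) - C (i + 1)).1
        + (C (i + 1) - C i).2 * (C (i + 2) - C (i + 1)).2 = 0)) :
    Noncrossing C n := by
  -- monotone propagation of vertices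
  have key : ∀ k l : ℕ, k ≤ l → l ≤ n → (C k).1 ≤ (C l).1 ∧ (C k).2 ≤ (C l).2 := by
    intro k l hkl hln
    induction l with
    | zero => obtain rfl : k = 0 := Nat.le_zero.mp hkl; exact ⟨le_rfl, le_rfl⟩
    | succ m ih =>
      rcases Nat.le_succ_iff.mp hkl with h | rfl
      · rcases hkl.lt_or_eq with hlt | rfl
        · have hm := ih (Nat.lt_succ_iff.mp hlt) (le_trans (Nat.le_succ m) hln)
          have hs := hmono m (Nat.lt_of_succ_le hln)
          exact ⟨hm.1.trans hs.1, hm.2.trans hs.2.1⟩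
        · exact ⟨le_rfl, le_rfl⟩
      · exact ⟨le_rfl, le_rfl⟩
  constructor
  · intro i j hjn hij
    ext p
    simp only [Set.mem_inter_iff, Set.mem_empty_iff_false, iff_false, not_and]
    intro hp1 hp2
    have hin : i < n := lt_trans (lt_trans (Nat.lt_add_one i) hij) hjn
    have hi := hmono i hin
    have hj := hmono j hjn
    have b1 := seg_bounds hi.1 hi.2.1 hp1
    have b2 := seg_bounds hj.1 hj.2.1 hp2
    -- C (i+2) ≤ C j (coordinatewise), and C (i+1) < C (i+2) somewhere
    have hstep : i + 1 < n := lt_trans hij hjn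
    have hi1 := hmono (i + 1) hstep
    have hcj := key (i + 2) j hij (le_of_lt hjn)
    apply hi1.2.2
    have e1 : (C (i + 2)).1 = (C (i + 1)).1 :=
      le_antisymm (by linarith [b1.2.1, b2.1, hcj.1]) hi1.1
    have e2 : (C (i + 2)).2 = (C (i + 1)).2 :=
      le_antisymm (by linarith [b1.2.2.2, b2.2.2.1, hcj.2]) hi1.2.1
    exact Prod.ext e1 e2
  · intro i hin
    have hi := hmono i (lt_trans (Nat.lt_add_one i) hin)
    have hi1 := hmono (i + 1) hin
    ext p
    simp only [Set.mem_inter_iff, Set.mem_singleton_iff]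
    constructor
    · rintro ⟨hp1, hp2⟩
      have b1 := seg_bounds hi.1 hi.2.1 hp1
      have b2 := seg_bounds hi1.1 hi1.2.1 hp2
      exact Prod.ext (le_antisymm b1.2.1 b2.1) (le_antisymm b1.2.2.2 b2.2.2.1)
    · rintro rfl
      exact ⟨right_mem_segment ℝ _ _, left_mem_segment ℝ _ _⟩
end

section
/- The equilateral orthogonal closed chain of length 8 with fixed angles θ(v_2) = θ(v_6) = 180° and θ(v_i) = 90° for i ∈ {0,1,3,4,5,7} has a configuration in the plane, but every configuration of it has a crossing (two nonadjacent edges sharing a point). -/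
/-- Euclidean length of a planar vector. -/
noncomputable def elen (v : ℝ × ℝ) : ℝ := Real.sqrt (v.1 ^ 2 + v.2 ^ 2)

/-- A configuration of the closed equilateral chain `(v_0,…,v_7,v_8=v_0)` with
fixed angles `θ(v_2) = θ(v_6) = 180°` and `θ(v_i) = 90°` otherwise. The map `C`
is 8-periodic, edges have unit length, a `180°` vertex lies between its neighbors
(equal consecutive displacements), and a `90°` vertex has perpendicular incident
edges. -/
def Config8 (C : ℕ → ℝ × ℝ) : Prop :=
  (∀ i, C (i + 8) = C i) ∧
  (∀ i, elen (C (i + 1) - C i) = 1) ∧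
  (∀ i, ((i + 1) % 8 = 2 ∨ (i + 1) % 8 = 6) →
    C (i + 2) - C (i + 1) = C (i + 1) - C i) ∧
  (∀ i, ¬ ((i + 1) % 8 = 2 ∨ (i + 1) % 8 = 6) →
    (C (i + 1) - C i).1 * (C (i + 2) - C (i + 1)).1
      + (C (i + 1) - C i).2 * (C (i + 2) - C (i + 1)).2 = 0)

/-- Edge `i` of the closed chain, as a segment in the plane. -/
def seg8 (C : ℕ → ℝ × ℝ) (i : ℕ) : Set (ℝ × ℝ) := segment ℝ (C i) (C (i + 1))

/-- A crossing: two cyclically nonadjacent edges intersect, or two adjacent edges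
share a point other than their common vertex. -/
def Crossing8 (C : ℕ → ℝ × ℝ) : Prop :=
  (∃ i j : Fin 8, i ≠ j ∧ j.val ≠ (i.val + 1) % 8 ∧ i.val ≠ (j.val + 1) % 8 ∧
    (seg8 C i.val ∩ seg8 C j.val).Nonempty) ∨
  (∃ i : Fin 8, ∃ x ∈ seg8 C i.val ∩ seg8 C (i.val + 1), x ≠ C (i.val + 1))

/- ### Auxiliary material -/

lemma cross_of_ortho (x1 x2 y1 y2 b1 b2 : ℝ) (hb : b1^2+b2^2=1)
    (hx : x1*b1+x2*b2=0) (hy : y1*b1+y2*b2=0) : x1*y2-x2*y1 = 0 := by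
  linear_combination (y2*b1 - y1*b2)*hx - (x2*b1 - x1*b2)*hy - (x1*y2-x2*y1)*hb

lemma ortho_of (x1 x2 y1 y2 z1 z2 : ℝ) (hx : x1^2+x2^2=1)
    (hcy : x1*y2 - x2*y1 = 0) (hz : x1*z1+x2*z2 = 0) : y1*z1+y2*z2 = 0 := by
  linear_combination (x1*y1+x2*y2)*hz + (x1*z2-x2*z1)*hcy - (y1*z1+y2*z2)*hx

lemma cross_trans (x1 x2 y1 y2 z1 z2 : ℝ) (hx : x1^2+x2^2 = 1)
    (hy : x1*y2-x2*y1=0) (hz : x1*z2-x2*z1=0) : y1*z2-y2*z1 = 0 := by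
  linear_combination (x1*y1+x2*y2)*hz - (x1*z1+x2*z2)*hy - (y1*z2-y2*z1)*hx

lemma dot_sq_one (x1 x2 y1 y2 : ℝ) (hx : x1^2+x2^2=1) (hy : y1^2+y2^2=1)
    (hc : x1*y2-x2*y1=0) : (x1*y1+x2*y2)^2 = 1 := by
  linear_combination (y1^2+y2^2)*hx + hy - (x1*y2-x2*y1)*hc

lemma sq_sum_zero (x y : ℝ) (h : x^2 + y^2 = 0) : x = 0 ∧ y = 0 := by
  have hx : x^2 = 0 := le_antisymm (by nlinarith [sq_nonneg y]) (sq_nonneg x)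
  have hy : y^2 = 0 := by linarith
  exact ⟨pow_eq_zero_iff two_ne_zero |>.mp hx, pow_eq_zero_iff two_ne_zero |>.mp hy⟩

lemma key8 (a0 b0 a1 b1 a2 b2 a3 b3 a4 b4 a5 b5 a6 b6 a7 b7 : ℝ)
    (u0 : a0^2+b0^2=1) (u1 : a1^2+b1^2=1) (u3 : a3^2+b3^2=1)
    (u4 : a4^2+b4^2=1) (u5 : a5^2+b5^2=1) (u7 : a7^2+b7^2=1)
    (e2 : a2 = a1) (f2 : b2 = b1) (e6 : a6 = a5) (f6 : b6 = b5)
    (p01 : a0*a1+b0*b1 = 0) (p23 : a2*a3+b2*b3=0) (p34 : a3*a4+b3*b4=0)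
    (p45 : a4*a5+b4*b5=0) (p70 : a7*a0+b7*b0 = 0)
    (sa : a0+a1+a2+a3+a4+a5+a6+a7 = 0) (sb : b0+b1+b2+b3+b4+b5+b6+b7 = 0) :
    a2+a3+a4+a5 = 0 ∧ b2+b3+b4+b5 = 0 := by
  subst e2 f2 e6 f6
  have q31 : a3*a2 + b3*b2 = 0 := by linear_combination p23
  have c30 : a3*b0 - b3*a0 = 0 := cross_of_ortho a3 b3 a0 b0 a2 b2 u1 q31 p01
  have q04 : a0*a4 + b0*b4 = 0 := ortho_of a3 b3 a0 b0 a4 b4 u3 c30 p34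
  have c41 : a4*b2 - b4*a2 = 0 :=
    cross_of_ortho a4 b4 a2 b2 a3 b3 u3 (by linear_combination p34) (by linear_combination q31)
  have c53 : a6*b3 - b6*a3 = 0 :=
    cross_of_ortho a6 b6 a3 b3 a4 b4 u4 (by linear_combination p45) p34
  have c50 : a6*b0 - b6*a0 = 0 :=
    cross_trans a3 b3 a6 b6 a0 b0 u3 (by linear_combination -c53) c30
  have q51 : a6*a2 + b6*b2 = 0 :=
    ortho_of a0 b0 a6 b6 a2 b2 u0 (by linear_combination -c50) p01
  have c71 : a7*b2 - b7*a2 = 0 := cross_of_ortho a7 b7 a2 b2 a0 b0 u0 p70 (by linear_combination p01)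
  have relA : (a3*a0+b3*b0) + 2*(a6*a0+b6*b0) + 1 = 0 := by
    linear_combination a0*sa + b0*sb - u0 - 2*p01 - q04 - p70
  have relB : (a4*a2+b4*b2) + (a7*a2+b7*b2) + 2 = 0 := by
    linear_combination a2*sa + b2*sb - p01 - 2*u1 - q31 - 2*q51
  have t3sq : (a3*a0+b3*b0)^2 = 1 := dot_sq_one a3 b3 a0 b0 u3 u0 c30
  have t5sq : (a6*a0+b6*b0)^2 = 1 := dot_sq_one a6 b6 a0 b0 u5 u0 c50
  have t4sq : (a4*a2+b4*b2)^2 = 1 := dot_sq_one a4 b4 a2 b2 u4 u1 c41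
  have t7sq : (a7*a2+b7*b2)^2 = 1 := dot_sq_one a7 b7 a2 b2 u7 u1 c71
  have ht3 : a3*a0+b3*b0 = 1 := by
    rcases mul_eq_zero.1 (show (a3*a0+b3*b0 - 1) * (a3*a0+b3*b0 + 1) = 0 by
      linear_combination t3sq) with h | h
    · linarith
    · exfalso
      have h5 : a6*a0+b6*b0 = 0 := by linarith
      rw [h5] at t5sq; norm_num at t5sq
  have ht5 : a6*a0+b6*b0 = -1 := by linarith
  have ht4 : a4*a2+b4*b2 = -1 := by
    rcases mul_eq_zero.1 (show (a4*a2+b4*b2 - 1) * (a4*a2+b4*b2 + 1) = 0 by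
      linear_combination t4sq) with h | h
    · exfalso
      have h7 : a7*a2+b7*b2 = -3 := by linarith
      rw [h7] at t7sq; norm_num at t7sq
    · linarith
  have h3 : (a3-a0)^2 + (b3-b0)^2 = 0 := by linear_combination u3 + u0 - 2*ht3
  have h5 : (a6+a0)^2 + (b6+b0)^2 = 0 := by linear_combination u5 + u0 + 2*ht5
  have h4 : (a4+a2)^2 + (b4+b2)^2 = 0 := by linear_combination u4 + u1 + 2*ht4
  obtain ⟨e3, e3'⟩ := sq_sum_zero _ _ h3
  obtain ⟨e5, e5'⟩ := sq_sum_zero _ _ h5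
  obtain ⟨e4, e4'⟩ := sq_sum_zero _ _ h4
  constructor <;> linarith

def pt8 : ℕ → ℝ × ℝ
  | 0 => (0,0) | 1 => (1,0) | 2 => (1,1) | 3 => (1,2)
  | 4 => (2,2) | 5 => (2,1) | 6 => (1,1) | _ => (0,1)

def exC (i : ℕ) : ℝ × ℝ := pt8 (i % 8)

lemma exC_config : Config8 exC := by
  have m1 : ∀ i : ℕ, (i+1) % 8 = (i % 8 + 1) % 8 := fun i => by
    conv_lhs => rw [Nat.add_mod]
  have m2 : ∀ i : ℕ, (i+2) % 8 = (i % 8 + 2) % 8 := fun i => by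
    conv_lhs => rw [Nat.add_mod]
  refine ⟨fun i => by simp [exC, Nat.add_mod_right], ?_, ?_, ?_⟩
  · intro i
    have hr : i % 8 < 8 := Nat.mod_lt _ (by norm_num)
    rw [show exC (i+1) = pt8 ((i % 8 + 1) % 8) by rw [exC, m1],
        show exC i = pt8 (i % 8) from rfl]
    set r := i % 8 with hrd
    clear_value r
    interval_cases r <;> norm_num [pt8, elen, Prod.ext_iff]
  · intro i h
    rw [m1] at h
    rw [show exC (i+1) = pt8 ((i % 8 + 1) % 8) by rw [exC, m1],
        show exC (i+2) = pt8 ((i % 8 + 2) % 8) by rw [exC, m2],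
        show exC i = pt8 (i % 8) from rfl]
    have hr : i % 8 < 8 := Nat.mod_lt _ (by norm_num)
    set r := i % 8 with hrd
    clear_value r
    interval_cases r <;> first
      | (exfalso; omega)
      | norm_num [pt8, Prod.ext_iff]
  · intro i h
    rw [m1] at h
    rw [show exC (i+1) = pt8 ((i % 8 + 1) % 8) by rw [exC, m1],
        show exC (i+2) = pt8 ((i % 8 + 2) % 8) by rw [exC, m2],
        show exC i = pt8 (i % 8) from rfl]
    have hr : i % 8 < 8 := Nat.mod_lt _ (by norm_num)
    set r := i % 8 with hrd
    clear_value r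
    interval_cases r <;> first
      | (exfalso; exact h (by omega))
      | norm_num [pt8]

/-- In any configuration the vertices `v_2` and `v_6` coincide. -/
lemma config8_v6_eq_v2 (C : ℕ → ℝ × ℝ) (hC : Config8 C) : C 6 = C 2 := by
  obtain ⟨hper, hlen, hstr, hperp⟩ := hC
  have unit : ∀ i : ℕ, ((C (i+1)).1 - (C i).1)^2 + ((C (i+1)).2 - (C i).2)^2 = 1 := by
    intro i
    have h := hlen i
    rw [elen] at h
    have h2 := Real.sqrt_eq_one.mp h
    simpa [Prod.fst_sub, Prod.snd_sub] using h2
  have hC8 : C 8 = C 0 := by simpa using hper 0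
  have hC9 : C 9 = C 1 := by simpa using hper 1
  -- straight-angle conditions
  have hs2 := hstr 1 (by norm_num)
  have hs6 := hstr 5 (by norm_num)
  norm_num [Prod.ext_iff, Prod.fst_sub, Prod.snd_sub] at hs2 hs6
  -- perpendicularity conditions
  have hp0 := hperp 0 (by norm_num)
  have hp2 := hperp 2 (by norm_num)
  have hp3 := hperp 3 (by norm_num)
  have hp4 := hperp 4 (by norm_num)
  have hp7 := hperp 7 (by norm_num)
  norm_num [Prod.fst_sub, Prod.snd_sub, hC8, hC9] at hp0 hp2 hp3 hp4 hp7
  have u0 := unit 0; have u1 := unit 1; have u3 := unit 3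
  have u4 := unit 4; have u5 := unit 5; have u7 := unit 7
  norm_num at u0 u1 u3 u4 u5 u7
  rw [hC8] at u7
  have key := key8 ((C 1).1 - (C 0).1) ((C 1).2 - (C 0).2)
    ((C 2).1 - (C 1).1) ((C 2).2 - (C 1).2)
    ((C 3).1 - (C 2).1) ((C 3).2 - (C 2).2)
    ((C 4).1 - (C 3).1) ((C 4).2 - (C 3).2)
    ((C 5).1 - (C 4).1) ((C 5).2 - (C 4).2)
    ((C 6).1 - (C 5).1) ((C 6).2 - (C 5).2)
    ((C 7).1 - (C 6).1) ((C 7).2 - (C 6).2)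
    ((C 0).1 - (C 7).1) ((C 0).2 - (C 7).2)
    u0 u1 u3 u4 u5 u7
    (by linarith [hs2.1]) (by linarith [hs2.2]) (by linarith [hs6.1]) (by linarith [hs6.2])
    (by linear_combination hp0) (by linear_combination hp2) (by linear_combination hp3)
    (by linear_combination hp4) (by linear_combination hp7)
    (by ring) (by ring)
  obtain ⟨ka, kb⟩ := key
  exact Prod.ext (by linarith) (by linarith)

/-- The closed equilateral orthogonal chain of length 8 with straight angles at
`v_2, v_6` and right angles elsewhere has a planar configuration, but every such
configuration has a crossing. -/
theorem stmt4 : (∃ C : ℕ → ℝ × ℝ, Config8 C) ∧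
    (∀ C : ℕ → ℝ × ℝ, Config8 C → Crossing8 C) := by
  constructor
  · exact ⟨exC, exC_config⟩
  · intro C hC
    have h62 : C 6 = C 2 := config8_v6_eq_v2 C hC
    refine Or.inl ⟨⟨1, by norm_num⟩, ⟨6, by norm_num⟩, ?_, ?_, ?_, ⟨C 2, ?_, ?_⟩⟩
    · exact Fin.ne_of_val_ne (by norm_num)
    · norm_num
    · norm_num
    · show C 2 ∈ seg8 C 1
      rw [seg8]
      exact right_mem_segment ℝ (C 1) (C (1+1))
    · show C 2 ∈ seg8 C 6
      rw [seg8, h62]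
      exact left_mem_segment ℝ (C 2) (C (6+1))
end

section
/- Consider a closed orthogonal chain configuration whose vertices lie in 5ℤ × 5ℤ (all coordinates divisible by 5), together with a simple closed curve (the frame boundary) whose only opening is a gap containing no points of 5ℤ × 5ℤ. Then the chain cannot cross from the interior to the exterior of the frame: every edge of the chain either lies entirely inside or entirely outside the closed region bounded by the frame, and all edges lie on the same side. -/
private lemma seg_fst {x y q : ℝ × ℝ} (h : y.1 = x.1) (hq : q ∈ segment ℝ x y) :
    q.1 = x.1 := by
  obtain ⟨a, b, ha, hb, hab, rfl⟩ := hq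
  simp only [Prod.fst_add, Prod.smul_fst, smul_eq_mul, h]
  linear_combination x.1 * hab

private lemma seg_snd {x y q : ℝ × ℝ} (h : y.2 = x.2) (hq : q ∈ segment ℝ x y) :
    q.2 = x.2 := by
  obtain ⟨a, b, ha, hb, hab, rfl⟩ := hq
  simp only [Prod.snd_add, Prod.smul_snd, smul_eq_mul, h]
  linear_combination x.2 * hab

/-- A closed orthogonal chain whose vertices lie in `5ℤ × 5ℤ` cannot cross a frame
whose boundary (frontier of the framed region `R`) is blocked except along a gap `S`
containing no points of the `5ℤ` grid lines: every edge of the chain lies entirely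
inside the region or entirely outside it, and all edges lie on the same side. -/
theorem stmt9 (n : ℕ) (hn : 0 < n) (p : ℕ → ℝ × ℝ) (hclosed : p n = p 0)
    (hgrid : ∀ i ≤ n, ∃ a b : ℤ, p i = ((5 * a : ℝ), (5 * b : ℝ)))
    (hortho : ∀ i < n, (p (i + 1)).1 = (p i).1 ∨ (p (i + 1)).2 = (p i).2)
    (R S : Set (ℝ × ℝ))
    (hS : ∀ q ∈ S, (¬ ∃ a : ℤ, q.1 = (5 * a : ℝ)) ∧ (¬ ∃ b : ℤ, q.2 = (5 * b : ℝ)))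
    (hcross : ∀ i < n, segment ℝ (p i) (p (i + 1)) ∩ frontier R ⊆ S) :
    (∀ i < n, segment ℝ (p i) (p (i + 1)) ⊆ interior R) ∨
    (∀ i < n, segment ℝ (p i) (p (i + 1)) ∩ closure R = ∅) := by
  -- no segment point lies in S
  have hnoS : ∀ i < n, ∀ q ∈ segment ℝ (p i) (p (i + 1)), q ∉ S := by
    intro i hi q hq hqS
    obtain ⟨a, b, hab⟩ := hgrid i hi.le
    rcases hortho i hi with h | h
    · exact (hS q hqS).1 ⟨a, by rw [seg_fst h hq, hab]⟩
    · exact (hS q hqS).2 ⟨b, by rw [seg_snd h hq, hab]⟩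
  -- segments avoid the frontier
  have hdisj : ∀ i < n, ∀ q ∈ segment ℝ (p i) (p (i + 1)), q ∉ frontier R := by
    intro i hi q hq hqf
    exact hnoS i hi q hq (hcross i hi ⟨hq, hqf⟩)
  have hIC : Disjoint (interior R) (closure R)ᶜ :=
    Set.disjoint_compl_right_iff_subset.mpr (interior_subset.trans subset_closure)
  -- each segment lies in interior or in the exterior
  have key : ∀ i < n, segment ℝ (p i) (p (i + 1)) ⊆ interior R ∨
      segment ℝ (p i) (p (i + 1)) ⊆ (closure R)ᶜ := by
    intro i hi
    refine ((convex_segment _ _).isPreconnected).subset_or_subset isOpen_interior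
      isClosed_closure.isOpen_compl hIC ?_
    intro q hq
    rcases em (q ∈ closure R) with hc | hc
    · left
      rcases (closure_eq_interior_union_frontier R ▸ hc) with h | h
      · exact h
      · exact absurd h (hdisj i hi q hq)
    · exact Or.inr hc
  rcases key 0 hn with h0 | h0
  · left
    have hmem : ∀ i ≤ n, p i ∈ interior R := by
      intro i hi
      induction i with
      | zero => exact h0 (left_mem_segment ℝ _ _)
      | succ k ih =>
        have hk : k < n := hi
        rcases key k hk with hs | hs
        · exact hs (right_mem_segment ℝ _ _)
        · exact absurd (subset_closure (interior_subset (ih hk.le)))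
            (hs (left_mem_segment ℝ _ _))
    intro i hi
    rcases key i hi with hs | hs
    · exact hs
    · exact absurd (subset_closure (interior_subset (hmem i hi.le)))
        (hs (left_mem_segment ℝ _ _))
  · right
    have hmem : ∀ i ≤ n, p i ∉ closure R := by
      intro i hi
      induction i with
      | zero => exact h0 (left_mem_segment ℝ _ _)
      | succ k ih =>
        have hk : k < n := hi
        rcases key k hk with hs | hs
        · exact absurd (subset_closure (interior_subset (hs (left_mem_segment ℝ _ _))))
            (ih hk.le)
        · exact hs (right_mem_segment ℝ _ _)
    intro i hi
    rcases key i hi with hs | hs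
    · exact absurd (subset_closure (interior_subset (hs (left_mem_segment ℝ _ _))))
        (hmem i hi.le)
    · exact Set.eq_empty_of_forall_notMem fun q ⟨hq1, hq2⟩ => hs hq1 hq2
end

section
/- Let T be a 'tab': an orthogonal path of three segments with lengths h+2, 1, h+2 (vertical, horizontal, vertical), whose two endpoints lie at two fixed points at distance 1 apart on a horizontal axis. Then T has exactly two noncrossing configurations: the U-shape extending h+2 above the axis with the middle segment going rightward, and its reflection through the axis. -/
lemma seg_vert (c y1 y2 : ℝ) :
    segment ℝ ((c, y1) : ℝ × ℝ) (c, y2) = {c} ×ˢ segment ℝ y1 y2 := by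
  ext ⟨p, q⟩
  simp only [segment, Set.mem_setOf_eq, Set.mem_prod, Set.mem_singleton_iff,
    Prod.smul_mk, Prod.mk_add_mk, Prod.mk.injEq, smul_eq_mul]
  constructor
  · rintro ⟨u, v, hu, hv, huv, h1, h2⟩
    exact ⟨by rw [← h1, ← add_mul, huv, one_mul], u, v, hu, hv, huv, h2⟩
  · rintro ⟨hp, u, v, hu, hv, huv, h2⟩
    exact ⟨u, v, hu, hv, huv, by rw [hp, ← add_mul, huv, one_mul], h2⟩

lemma seg_horiz (c x1 x2 : ℝ) :
    segment ℝ ((x1, c) : ℝ × ℝ) (x2, c) = segment ℝ x1 x2 ×ˢ {c} := by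
  ext ⟨p, q⟩
  simp only [segment, Set.mem_setOf_eq, Set.mem_prod, Set.mem_singleton_iff,
    Prod.smul_mk, Prod.mk_add_mk, Prod.mk.injEq, smul_eq_mul]
  constructor
  · rintro ⟨u, v, hu, hv, huv, h1, h2⟩
    exact ⟨⟨u, v, hu, hv, huv, h1⟩, by rw [← h2, ← add_mul, huv, one_mul]⟩
  · rintro ⟨⟨u, v, hu, hv, huv, h1⟩, hq⟩
    exact ⟨u, v, hu, hv, huv, h1, by rw [hq, ← add_mul, huv, one_mul]⟩

/-- A tab — an orthogonal path of three segments with lengths `h+2, 1, h+2`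
(vertical, horizontal, vertical) whose endpoints are pinned at `(x,0)` and `(x+1,0)`
on the axis — has exactly two noncrossing configurations: the U-shape extending
`h+2` above the axis with middle segment going rightward, and its reflection
through the axis. With signs `s1, s2` for the vertical segments and `t` for the
horizontal one, this says the configuration closes up and is noncrossing iff
`t = 1` and `s2 = -s1`. -/
theorem stmt11 (h : ℕ) (x : ℝ) (s1 s2 t : ℝ)
    (hs1 : s1 = 1 ∨ s1 = -1) (hs2 : s2 = 1 ∨ s2 = -1) (ht : t = 1 ∨ t = -1) :
    (((x + t, s1 * ((h : ℝ) + 2) + s2 * ((h : ℝ) + 2)) = ((x + 1 : ℝ), (0 : ℝ)) ∧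
      segment ℝ (x, 0) (x, s1 * ((h : ℝ) + 2)) ∩
        segment ℝ (x, s1 * ((h : ℝ) + 2)) (x + t, s1 * ((h : ℝ) + 2)) =
        {(x, s1 * ((h : ℝ) + 2))} ∧
      segment ℝ (x, s1 * ((h : ℝ) + 2)) (x + t, s1 * ((h : ℝ) + 2)) ∩
        segment ℝ (x + t, s1 * ((h : ℝ) + 2))
          (x + t, s1 * ((h : ℝ) + 2) + s2 * ((h : ℝ) + 2)) =
        {(x + t, s1 * ((h : ℝ) + 2))} ∧
      segment ℝ (x, 0) (x, s1 * ((h : ℝ) + 2)) ∩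
        segment ℝ (x + t, s1 * ((h : ℝ) + 2))
          (x + t, s1 * ((h : ℝ) + 2) + s2 * ((h : ℝ) + 2)) = ∅) ↔
    (t = 1 ∧ s2 = -s1)) := by
  have hH : (0 : ℝ) < (h : ℝ) + 2 := by positivity
  constructor
  · rintro ⟨hclose, -⟩
    rw [Prod.mk.injEq] at hclose
    obtain ⟨h1, h2⟩ := hclose
    constructor
    · linarith
    · have : (s1 + s2) * ((h : ℝ) + 2) = 0 := by linarith [h2]; 
      have h3 : s1 + s2 = 0 := by
        rcases mul_eq_zero.mp this with h | h
        · exact h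
        · linarith
      linarith
  · rintro ⟨ht1, hs⟩
    subst ht1 hs
    set a : ℝ := s1 * ((h : ℝ) + 2) with ha
    have haz : a ≠ 0 := by
      rcases hs1 with rfl | rfl <;> simp [ha] <;> linarith
    have hsum : a + -s1 * ((h : ℝ) + 2) = 0 := by rw [ha]; ring
    refine ⟨by rw [Prod.mk.injEq]; exact ⟨rfl, by ring⟩, ?_, ?_, ?_⟩
    · rw [seg_vert, seg_horiz, Set.prod_inter_prod]
      rw [show ({x} : Set ℝ) ∩ segment ℝ x (x + 1) = {x} from
        Set.inter_eq_left.mpr (by simp [left_mem_segment]),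
        show segment ℝ 0 a ∩ {a} = {a} from
        Set.inter_eq_right.mpr (by simp [right_mem_segment]),
        Set.singleton_prod_singleton]
    · rw [seg_vert, seg_horiz, Set.prod_inter_prod]
      rw [show segment ℝ x (x + 1) ∩ {x + 1} = {x + 1} from
        Set.inter_eq_right.mpr (by simp [right_mem_segment]),
        show ({a} : Set ℝ) ∩ segment ℝ a (a + -s1 * ((h : ℝ) + 2)) = {a} from
        Set.inter_eq_left.mpr (by simp [left_mem_segment]),
        Set.singleton_prod_singleton]
    · rw [seg_vert, seg_vert, Set.prod_inter_prod]
      have : ({x} : Set ℝ) ∩ {x + 1} = ∅ := by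
        ext y; simp
      rw [this, Set.empty_prod]
end

section
/- Suppose a bicolored equilateral orthogonal open chain has exactly two H vertices, namely its two endpoints, and the two edges incident to the endpoints are part of straight segments each of length greater than 9L, where L bounds the total length of the remainder of the chain. Then in any noncrossing configuration achieving an H–H contact (the two endpoints at distance 1), these two long segments must be parallel and must point in the same direction away from the contact (they cannot be collinear-opposite or perpendicular). -/
lemma elen_eq_abs (v : ℝ × ℝ) : elen v = ‖(⟨v.1, v.2⟩ : ℂ)‖ := by
  simp [elen, Complex.norm_def, Complex.normSq_mk]
  ring_nf

lemma elen_add_le (u v : ℝ × ℝ) : elen (u + v) ≤ elen u + elen v := by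
  rw [elen_eq_abs, elen_eq_abs, elen_eq_abs]
  have : (⟨(u+v).1, (u+v).2⟩ : ℂ) = ⟨u.1, u.2⟩ + ⟨v.1, v.2⟩ := by
    apply Complex.ext <;> simp
  rw [this]
  exact norm_add_le _ _

lemma elen_neg (v : ℝ × ℝ) : elen (-v) = elen v := by simp [elen]

lemma elen_sub_le (u v : ℝ × ℝ) : elen (u - v) ≤ elen u + elen v := by
  rw [sub_eq_add_neg]
  calc elen (u + -v) ≤ elen u + elen (-v) := elen_add_le u (-v)
  _ = elen u + elen v := by rw [elen_neg]

lemma elen_zero : elen 0 = 0 := by simp [elen]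

lemma chain_bound (C : ℕ → ℝ × ℝ) (n : ℕ)
    (hunit : ∀ i < n, elen (C (i + 1) - C i) = 1) :
    ∀ j, j ≤ n → ∀ i, i ≤ j → elen (C j - C i) ≤ (j : ℝ) - i := by
  intro j
  induction j with
  | zero => intro _ i hi; interval_cases i; simp [elen_zero]
  | succ j ih =>
    intro hj i hi
    rcases Nat.lt_or_ge i (j+1) with h | h
    · have hij : i ≤ j := Nat.lt_succ_iff.mp h
      have h1 : elen (C (j+1) - C j) = 1 := hunit j (by omega)
      have h2 := ih (by omega) i hij
      have : C (j+1) - C i = (C (j+1) - C j) + (C j - C i) := by abel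
      rw [this]
      calc elen _ ≤ elen (C (j+1) - C j) + elen (C j - C i) := elen_add_le _ _
      _ ≤ 1 + ((j:ℝ) - i) := by linarith
      _ = ((j+1 : ℕ):ℝ) - i := by push_cast; ring
    · have : i = j + 1 := by omega
      subst this; simp [elen_zero]

lemma sq_bound (x y t : ℝ) (ht : 0 ≤ t) (h : elen (x, y) ≤ t) :
    x ^ 2 + y ^ 2 ≤ t ^ 2 := by
  unfold elen at h
  have h0 : (0:ℝ) ≤ x ^ 2 + y ^ 2 := by positivity
  nlinarith [Real.sq_sqrt h0, Real.sqrt_nonneg (x ^ 2 + y ^ 2)]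

lemma perp_contra (x y L : ℝ) (hL : 0 ≤ L) (hx1 : 1 ≤ x) (hy1 : 1 ≤ y)
    (hx : 9 * L < x) (hy : 9 * L < y) (h : x ^ 2 + y ^ 2 ≤ (L + 1) ^ 2) : False := by
  nlinarith [sq_nonneg (79 * L - 2), mul_pos (sub_pos.2 hx) (show (0:ℝ) < x + 9 * L by linarith),
    mul_pos (sub_pos.2 hy) (show (0:ℝ) < y + 9 * L by linarith), sq_nonneg (x - 1), sq_nonneg (y - 1)]

lemma opp_contra (x y L : ℝ) (hL : 0 ≤ L) (hx1 : 1 ≤ x) (hy1 : 1 ≤ y)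
    (hx : 9 * L < x) (hy : 9 * L < y) (h : x + y ≤ L + 1) : False := by
  nlinarith

set_option maxHeartbeats 1000000 in
/-- Consider an equilateral orthogonal open chain whose two endpoints (the only H
vertices) are incident to straight segments of combinatorial lengths `a` and `b`,
each greater than `9L`, where `L` bounds the total length of the remainder of the
chain. In any noncrossing configuration achieving an H–H contact (endpoints at
distance 1), the two long segments must be parallel and point in the same direction
away from the contact (`e = d`): they can be neither collinear-opposite nor
perpendicular. -/
theorem stmt12 (n a b : ℕ) (L : ℝ) (hL0 : 0 ≤ L) (C : ℕ → ℝ × ℝ) (d e : ℝ × ℝ)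
    (hd : d ∈ ({(1, 0), (-1, 0), (0, 1), (0, -1)} : Set (ℝ × ℝ)))
    (he : e ∈ ({(1, 0), (-1, 0), (0, 1), (0, -1)} : Set (ℝ × ℝ)))
    (hunit : ∀ i < n, elen (C (i + 1) - C i) = 1)
    (hfirst : ∀ i ≤ a, C i = C 0 + (i : ℝ) • d)
    (hlast : ∀ i ≤ b, C (n - i) = C n + (i : ℝ) • e)
    (hab : a + b ≤ n)
    (hrem : (n : ℝ) - a - b ≤ L)
    (ha : 9 * L < (a : ℝ)) (hb : 9 * L < (b : ℝ))
    (hcontact : elen (C n - C 0) = 1)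
    (hnc : Noncrossing C n) :
    e = d := by
  have ha1 : (1:ℝ) ≤ (a:ℝ) := by
    have h0 : (0:ℝ) < (a:ℝ) := by nlinarith
    have h1 : 0 < a := by exact_mod_cast h0
    exact_mod_cast h1
  have hb1 : (1:ℝ) ≤ (b:ℝ) := by
    have h0 : (0:ℝ) < (b:ℝ) := by nlinarith
    have h1 : 0 < b := by exact_mod_cast h0
    exact_mod_cast h1
  have hanb : a ≤ n - b := by omega
  have hCa : C a = C 0 + (a:ℝ) • d := hfirst a le_rfl
  have hCnb : C (n - b) = C n + (b:ℝ) • e := hlast b le_rfl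
  have hmid : elen (C (n - b) - C a) ≤ ((n - b : ℕ) : ℝ) - (a:ℝ) :=
    chain_bound C n hunit (n - b) (by omega) a hanb
  have hcast : ((n - b : ℕ) : ℝ) = (n:ℝ) - b := by
    have hbn : b ≤ n := by omega
    push_cast [hbn]; ring
  have hmid' : elen (C (n - b) - C a) ≤ L := by
    rw [hcast] at hmid; linarith
  have hkey : elen ((b:ℝ) • e - (a:ℝ) • d) ≤ L + 1 := by
    have hrw : (b:ℝ) • e - (a:ℝ) • d = (C (n - b) - C a) - (C n - C 0) := by
      rw [hCa, hCnb]; abel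
    rw [hrw]
    calc elen _ ≤ elen (C (n - b) - C a) + elen (C n - C 0) := elen_sub_le _ _
    _ ≤ L + 1 := by rw [hcontact]; linarith
  clear hnc hunit hfirst hlast hcontact hmid hmid' hCa hCnb
  have hL1 : (0:ℝ) ≤ L + 1 := by linarith
  simp only [Set.mem_insert_iff, Set.mem_singleton_iff] at hd he
  rcases hd with rfl | rfl | rfl | rfl <;> rcases he with rfl | rfl | rfl | rfl <;>
    first
      | rfl
      | (exfalso
         simp only [Prod.smul_mk, smul_eq_mul, Prod.mk_sub_mk, mul_one, mul_zero,
           mul_neg, sub_zero, zero_sub, sub_neg_eq_add] at hkey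
         first
           | exact perp_contra a b L hL0 ha1 hb1 ha hb
               (by nlinarith [sq_bound _ _ _ hL1 hkey])
           | exact opp_contra a b L hL0 ha1 hb1 ha hb
               (by nlinarith [sq_bound _ _ _ hL1 hkey]))
end
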